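/- arXiv:1707.09072 — 2 statements merged into one kernel-verified Lean document; each statement's English description precedes it below -/
import Mathlib

section
/- Uniform existence of the pressure for continuous potentials (absence of metastable states on the lattice ℕ): For every continuous potential f:Ω→ℝ there exists a real number P(f) such that ‖(1/n) log(L_f^n 𝟙) − P(f)‖₀ → 0 as n→∞; that is, the functions x ↦ (1/n) log[(L_f^n 𝟙)(x)] converge uniformly on Ω to the constant P(f). -/
open MeasureTheory Filter Topology

noncomputable def dOmega {M : Type*} [MetricSpace M] (x y : ℕ → M) : ℝ :=
  ∑' n : ℕ, (1 / 2 : ℝ) ^ (n + 1) * dist (x n) (y n)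

/-- The sequence `(a, x₁, x₂, …)` obtained by prepending `a` to `x`. -/
def consSeq {M : Type*} (a : M) (x : ℕ → M) : ℕ → M := fun n => Nat.casesOn n a x

/-- The left shift `σ(x₁,x₂,…) = (x₂,x₃,…)`. -/
def shift {M : Type*} (x : ℕ → M) : ℕ → M := fun n => x (n + 1)

/-- The Ruelle transfer operator with a priori measure `μ` and potential `f`. -/
noncomputable def Ruelle {M : Type*} [MeasurableSpace M] (μ : Measure M)
    (f φ : (ℕ → M) → ℝ) : (ℕ → M) → ℝ :=
  fun x => ∫ a, Real.exp (f (consSeq a x)) * φ (consSeq a x) ∂μ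

/-- The `n`-th Birkhoff sum `S_n φ = Σ_{j=0}^{n-1} φ ∘ σ^j`. -/
noncomputable def birkhoff {M : Type*} (φ : (ℕ → M) → ℝ) (n : ℕ) : (ℕ → M) → ℝ :=
  fun x => ∑ j ∈ Finset.range n, φ (shift^[j] x)

/-- `f` is `α`-Hölder with respect to the metric `dOmega`. -/
def IsHolder {M : Type*} [MetricSpace M] (α : ℝ) (f : (ℕ → M) → ℝ) : Prop :=
  ∃ C : ℝ, 0 ≤ C ∧ ∀ x y, |f x - f y| ≤ C * dOmega x y ^ α


/-! Write `s n = log ‖L_f^n 𝟙‖₀`. Positivity and homogeneity of `L_f` give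
`L_f^{m+n} 𝟙 ≤ ‖L_f^n 𝟙‖₀ · L_f^m 𝟙`, so `s` is subadditive and `s n / n` converges by Fekete's
lemma. Conversely, `L_f^n 𝟙 x` and `L_f^n 𝟙 y` are integrals over the same words `a₁ … aₙ`, and the
potentials at `aⱼ₊₁ … aₙ x` and `aⱼ₊₁ … aₙ y` differ by at most `var_{n-j} f`, the variation of
`f` on cylinders of length `n - j`; so `s n - log L_f^n 𝟙 x ≤ ∑_{k=1}^n var_k f`, which is `o(n)`
because `var_k f → 0` by uniform continuity. -/

open PiNat (cylinder cylinder_anti)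
open scoped Uniformity

noncomputable def variation {M : Type*} (f : (ℕ → M) → ℝ) (k : ℕ) : ℝ :=
  sSup {r | ∃ x y, x ∈ cylinder y k ∧ |f x - f y| = r}

section Variation

variable {M : Type*} {f : (ℕ → M) → ℝ}

lemma variation_nonneg (k : ℕ) : 0 ≤ variation f k :=
  Real.sSup_nonneg <| by rintro _ ⟨x, y, -, rfl⟩; exact abs_nonneg _

lemma abs_sub_le_variation [TopologicalSpace M] [CompactSpace M] (hf : Continuous f) {k : ℕ}
    {x y : ℕ → M} (h : x ∈ cylinder y k) : |f x - f y| ≤ variation f k := by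
  obtain ⟨C, hC⟩ := isBounded_iff_forall_norm_le.1 (isCompact_range hf).isBounded
  refine le_csSup ⟨2 * C, ?_⟩ ⟨x, y, h, rfl⟩
  rintro _ ⟨u, v, -, rfl⟩
  have hu := hC _ ⟨u, rfl⟩
  have hv := hC _ ⟨v, rfl⟩
  rw [Real.norm_eq_abs] at hu hv
  linarith [abs_sub (f u) (f v)]

lemma exists_cylinder_subset_of_mem_uniformity [UniformSpace M]
    {V : Set ((ℕ → M) × (ℕ → M))} (hV : V ∈ 𝓤 (ℕ → M)) :
    ∃ N, ∀ x y, x ∈ cylinder y N → (x, y) ∈ V := by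
  let S : ℕ → Set ((ℕ → M) × (ℕ → M)) := fun N => {p | p.1 ∈ cylinder p.2 N}
  have hS : Antitone S := fun _ _ hmn _ hp => cylinder_anti _ hmn hp
  have hle : (⨅ N, 𝓟 (S N)) ≤ 𝓤 (ℕ → M) := by
    rw [Pi.uniformity]
    refine le_iInf fun i => tendsto_iff_comap.1 <| tendsto_iInf' (i + 1) ?_
    refine (tendsto_principal_principal.2 fun p hp => ?_).mono_right refl_le_uniformity
    exact hp i i.lt_succ_self
  obtain ⟨N, -, hN⟩ := (hasBasis_iInf_principal hS.directed_ge).mem_iff.1 (hle hV)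
  exact ⟨N, fun x y h => hN h⟩

lemma tendsto_variation [UniformSpace M] [CompactSpace M] (hf : Continuous f) :
    Tendsto (variation f) atTop (𝓝 0) := by
  rw [Metric.tendsto_atTop]
  intro ε hε
  obtain ⟨N, hN⟩ := exists_cylinder_subset_of_mem_uniformity
    (CompactSpace.uniformContinuous_of_continuous hf (Metric.dist_mem_uniformity (half_pos hε)))
  refine ⟨N, fun k hk => ?_⟩
  have : variation f k ≤ ε / 2 := by
    refine Real.sSup_le ?_ (half_pos hε).le
    rintro _ ⟨x, y, hxy, rfl⟩
    exact (hN x y (cylinder_anti y hk hxy)).le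
  rw [Real.dist_eq, sub_zero, abs_of_nonneg (variation_nonneg k)]
  linarith

end Variation

lemma continuous_consSeq {M : Type*} [TopologicalSpace M] :
    Continuous fun p : M × (ℕ → M) => consSeq p.1 p.2 := by
  refine continuous_pi fun n => ?_
  cases n with
  | zero => exact continuous_fst
  | succ k => exact (continuous_apply k).comp continuous_snd

lemma consSeq_mem_cylinder {M : Type*} {x y : ℕ → M} {k : ℕ} (a : M) (h : x ∈ cylinder y k) :
    consSeq a x ∈ cylinder (consSeq a y) (k + 1) := by
  rintro (_ | i) hi
  · rfl
  · exact h i (Nat.lt_of_succ_lt_succ hi)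

lemma continuous_ruelle_integrand {M : Type*} [TopologicalSpace M] {f : (ℕ → M) → ℝ}
    (hf : Continuous f) {φ : (ℕ → M) → ℝ} (hφ : Continuous φ) :
    Continuous fun p : M × (ℕ → M) =>
      Real.exp (f (consSeq p.1 p.2)) * φ (consSeq p.1 p.2) :=
  (Real.continuous_exp.comp (hf.comp continuous_consSeq)).mul (hφ.comp continuous_consSeq)

lemma ruelle_smul {M : Type*} [MeasurableSpace M] {μ : Measure M} {f : (ℕ → M) → ℝ} (c : ℝ)
    (φ : (ℕ → M) → ℝ) : Ruelle μ f (c • φ) = c • Ruelle μ f φ := by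
  funext x
  simp only [Ruelle, Pi.smul_apply, smul_eq_mul, ← integral_const_mul, mul_left_comm]

lemma ruelle_iterate_smul {M : Type*} [MeasurableSpace M] {μ : Measure M}
    {f : (ℕ → M) → ℝ} (c : ℝ) (φ : (ℕ → M) → ℝ) (n : ℕ) :
    (Ruelle μ f)^[n] (c • φ) = c • (Ruelle μ f)^[n] φ :=
  Function.Commute.iterate_left (fun φ => ruelle_smul c φ) n φ

section Ruelle

variable {M : Type*} [PseudoMetricSpace M] [CompactSpace M] [MeasurableSpace M]
  [OpensMeasurableSpace M] {μ : Measure M} {f : (ℕ → M) → ℝ}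

section FiniteMeasure

variable [IsFiniteMeasure μ]

lemma integrable_ruelle_integrand (hf : Continuous f) {φ : (ℕ → M) → ℝ} (hφ : Continuous φ)
    (x : ℕ → M) :
    Integrable (fun a => Real.exp (f (consSeq a x)) * φ (consSeq a x)) μ :=
  ((continuous_ruelle_integrand hf hφ).comp (continuous_id.prodMk continuous_const))
    |>.integrable_of_hasCompactSupport (HasCompactSupport.of_compactSpace _)

lemma continuous_ruelle (hf : Continuous f) {φ : (ℕ → M) → ℝ} (hφ : Continuous φ) :
    Continuous (Ruelle μ f φ) := by
  have hg := continuous_ruelle_integrand hf hφ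
  obtain ⟨C, hC⟩ := isBounded_iff_forall_norm_le.1 (isCompact_range hg).isBounded
  refine continuous_of_dominated (bound := fun _ => C)
    (fun x => (hg.comp (continuous_id.prodMk continuous_const)).aestronglyMeasurable)
    (fun x => .of_forall fun a => hC _ ⟨(a, x), rfl⟩) (integrable_const C)
    (.of_forall fun a => hg.comp (continuous_const.prodMk continuous_id))

lemma continuous_ruelle_iterate (hf : Continuous f) {φ : (ℕ → M) → ℝ} (hφ : Continuous φ)
    (n : ℕ) : Continuous ((Ruelle μ f)^[n] φ) := by
  induction n with
  | zero => exact hφ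
  | succ n ih => rw [Function.iterate_succ_apply']; exact continuous_ruelle hf ih

lemma ruelle_le_mul_ruelle (hf : Continuous f) {φ ψ : (ℕ → M) → ℝ} (hφ : Continuous φ)
    (hψ : Continuous ψ) {x y : ℕ → M} {C : ℝ}
    (h : ∀ a, Real.exp (f (consSeq a x)) * φ (consSeq a x) ≤
      C * (Real.exp (f (consSeq a y)) * ψ (consSeq a y))) :
    Ruelle μ f φ x ≤ C * Ruelle μ f ψ y := by
  rw [Ruelle, Ruelle, ← integral_const_mul]
  exact integral_mono (integrable_ruelle_integrand hf hφ x)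
    ((integrable_ruelle_integrand hf hψ y).const_mul C) h

lemma ruelle_mono (hf : Continuous f) {φ ψ : (ℕ → M) → ℝ} (hφ : Continuous φ)
    (hψ : Continuous ψ) (h : φ ≤ ψ) : Ruelle μ f φ ≤ Ruelle μ f ψ := fun x => by
  simpa using ruelle_le_mul_ruelle (μ := μ) hf hφ hψ (x := x) (C := 1) fun a =>
    by simpa using mul_le_mul_of_nonneg_left (h _) (Real.exp_nonneg _)

lemma ruelle_iterate_mono (hf : Continuous f) {φ ψ : (ℕ → M) → ℝ} (hφ : Continuous φ)
    (hψ : Continuous ψ) (h : φ ≤ ψ) (n : ℕ) : (Ruelle μ f)^[n] φ ≤ (Ruelle μ f)^[n] ψ := by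
  induction n with
  | zero => exact h
  | succ n ih =>
    simp only [Function.iterate_succ_apply']
    exact ruelle_mono hf (continuous_ruelle_iterate hf hφ n) (continuous_ruelle_iterate hf hψ n) ih

end FiniteMeasure

variable [IsProbabilityMeasure μ]

lemma exp_mul_le_ruelle_iterate_one (hf : Continuous f) {b : ℝ} (hb : ∀ x, b ≤ f x) (n : ℕ)
    (x : ℕ → M) : Real.exp (n * b) ≤ (Ruelle μ f)^[n] 1 x := by
  induction n generalizing x with
  | zero => simp
  | succ n ih =>
    rw [Function.iterate_succ_apply']
    calc Real.exp ((n + 1 : ℕ) * b) = ∫ _ : M, Real.exp b * Real.exp (n * b) ∂μ := by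
          rw [integral_const, probReal_univ, one_smul, ← Real.exp_add]
          push_cast
          ring_nf
      _ ≤ _ := integral_mono (integrable_const _)
          (integrable_ruelle_integrand hf
            (continuous_ruelle_iterate (φ := 1) hf continuous_const n) x)
          fun a => mul_le_mul (Real.exp_le_exp.2 (hb _)) (ih _) (Real.exp_nonneg _)
            (Real.exp_nonneg _)

lemma ruelle_iterate_one_pos (hf : Continuous f) (n : ℕ) (x : ℕ → M) :
    0 < (Ruelle μ f)^[n] 1 x := by
  obtain ⟨b, hb⟩ := (isCompact_range hf).bddBelow
  exact (Real.exp_pos _).trans_le (exp_mul_le_ruelle_iterate_one hf (fun y => hb ⟨y, rfl⟩) n x)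

lemma ruelle_iterate_one_le_of_mem_cylinder (hf : Continuous f) (n : ℕ) {k : ℕ}
    {x y : ℕ → M} (h : x ∈ cylinder y k) :
    (Ruelle μ f)^[n] 1 x ≤
      Real.exp (∑ j ∈ Finset.range n, variation f (j + k + 1)) * (Ruelle μ f)^[n] 1 y := by
  induction n generalizing k x y with
  | zero => simp
  | succ n ih =>
    have hsum : ∑ j ∈ Finset.range (n + 1), variation f (j + k + 1) =
        variation f (k + 1) + ∑ j ∈ Finset.range n, variation f (j + (k + 1) + 1) := by
      rw [Finset.sum_range_succ', add_comm, zero_add]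
      congr 1
      exact Finset.sum_congr rfl fun j _ => by ring_nf
    have hA := continuous_ruelle_iterate (μ := μ) (φ := 1) hf continuous_const n
    simp only [Function.iterate_succ_apply']
    rw [hsum, Real.exp_add]
    refine ruelle_le_mul_ruelle hf hA hA fun a => ?_
    have hf_le : f (consSeq a x) ≤ variation f (k + 1) + f (consSeq a y) := by
      linarith [(abs_le.1 (abs_sub_le_variation hf (consSeq_mem_cylinder a h))).2]
    calc Real.exp (f (consSeq a x)) * (Ruelle μ f)^[n] 1 (consSeq a x)
        ≤ (Real.exp (variation f (k + 1)) * Real.exp (f (consSeq a y))) *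
          (Real.exp (∑ j ∈ Finset.range n, variation f (j + (k + 1) + 1)) *
            (Ruelle μ f)^[n] 1 (consSeq a y)) := by
          refine mul_le_mul ?_ (ih (consSeq_mem_cylinder a h))
            (ruelle_iterate_one_pos hf n _).le (by positivity)
          rw [← Real.exp_add]
          exact Real.exp_le_exp.2 hf_le
      _ = _ := by ring

end Ruelle

lemma tendstoUniformly_const_of_le_of_le {ι α : Type*} {l : Filter ι} {F : ι → α → ℝ}
    {g h : ι → ℝ} {p : ℝ} (hg : Tendsto g l (𝓝 p)) (hh : Tendsto h l (𝓝 p))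
    (hgF : ∀ n x, g n ≤ F n x) (hFh : ∀ n x, F n x ≤ h n) :
    TendstoUniformly F (fun _ => p) l := by
  rw [Metric.tendstoUniformly_iff]
  intro ε hε
  filter_upwards [hg.eventually_const_lt (sub_lt_self p hε),
    hh.eventually_lt_const (lt_add_of_pos_right p hε)] with n hgn hhn x
  rw [Real.dist_eq, abs_sub_lt_iff]
  constructor <;> linarith [hgF n x, hFh n x]

/-- `log ‖L_f^n 𝟙‖₀`. -/
noncomputable def ruelleLogSup {M : Type*} [MeasurableSpace M] (μ : Measure M)
    (f : (ℕ → M) → ℝ) (n : ℕ) : ℝ :=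
  ⨆ x, Real.log ((Ruelle μ f)^[n] 1 x)

section Pressure

variable {M : Type*} [PseudoMetricSpace M] [CompactSpace M] [MeasurableSpace M]
  [OpensMeasurableSpace M] (μ : Measure M) [IsProbabilityMeasure μ] {f : (ℕ → M) → ℝ}

lemma log_ruelle_iterate_le_ruelleLogSup (hf : Continuous f) (n : ℕ) (x : ℕ → M) :
    Real.log ((Ruelle μ f)^[n] 1 x) ≤ ruelleLogSup μ f n := by
  have hlog : Continuous fun y => Real.log ((Ruelle μ f)^[n] 1 y) :=
    (continuous_ruelle_iterate (μ := μ) hf continuous_const n).log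
      fun y => (ruelle_iterate_one_pos hf n y).ne'
  exact le_ciSup (isCompact_range hlog).bddAbove x

lemma ruelleLogSup_le_log_add (hf : Continuous f) (n : ℕ) (x : ℕ → M) :
    ruelleLogSup μ f n ≤
      Real.log ((Ruelle μ f)^[n] 1 x) + ∑ j ∈ Finset.range n, variation f (j + 1) := by
  have : Nonempty (ℕ → M) := ⟨x⟩
  refine ciSup_le fun y => ?_
  have hx := ruelle_iterate_one_pos (μ := μ) hf n x
  have hyx := ruelle_iterate_one_le_of_mem_cylinder (μ := μ) hf n (k := 0) (x := y) (y := x)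
    fun i hi => absurd hi i.not_lt_zero
  simp only [add_zero] at hyx
  calc Real.log ((Ruelle μ f)^[n] 1 y)
      ≤ Real.log (Real.exp (∑ j ∈ Finset.range n, variation f (j + 1)) *
          (Ruelle μ f)^[n] 1 x) := Real.log_le_log (ruelle_iterate_one_pos hf n y) hyx
    _ = _ := by rw [Real.log_mul (Real.exp_ne_zero _) hx.ne', Real.log_exp, add_comm]

lemma subadditive_ruelleLogSup (hf : Continuous f) : Subadditive (ruelleLogSup μ f) := by
  intro m n
  have := nonempty_of_isProbabilityMeasure μ
  refine ciSup_le fun x => ?_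
  have hA := continuous_ruelle_iterate (μ := μ) (φ := 1) hf continuous_const
  have hbound : (Ruelle μ f)^[n] 1 ≤ Real.exp (ruelleLogSup μ f n) • 1 := fun y => by
    simpa [Real.exp_log (ruelle_iterate_one_pos hf n y)] using
      Real.exp_le_exp.2 (log_ruelle_iterate_le_ruelleLogSup μ hf n y)
  have hiter :
      (Ruelle μ f)^[m + n] 1 x ≤ Real.exp (ruelleLogSup μ f n) * (Ruelle μ f)^[m] 1 x := by
    rw [Function.iterate_add_apply]
    have := ruelle_iterate_mono (μ := μ) hf (hA n) (continuous_const.const_smul _) hbound m x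
    rwa [ruelle_iterate_smul, Pi.smul_apply, smul_eq_mul] at this
  calc Real.log ((Ruelle μ f)^[m + n] 1 x)
      ≤ Real.log (Real.exp (ruelleLogSup μ f n) * (Ruelle μ f)^[m] 1 x) :=
        Real.log_le_log (ruelle_iterate_one_pos hf _ x) hiter
    _ = ruelleLogSup μ f n + Real.log ((Ruelle μ f)^[m] 1 x) := by
        rw [Real.log_mul (Real.exp_ne_zero _) (ruelle_iterate_one_pos hf m x).ne', Real.log_exp]
    _ ≤ ruelleLogSup μ f m + ruelleLogSup μ f n := by
        linarith [log_ruelle_iterate_le_ruelleLogSup μ hf m x]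

lemma bddBelow_ruelleLogSup_div (hf : Continuous f) :
    BddBelow (Set.range fun n => ruelleLogSup μ f n / n) := by
  obtain ⟨b, hb⟩ := (isCompact_range hf).bddBelow
  obtain ⟨a⟩ := nonempty_of_isProbabilityMeasure μ
  refine ⟨min b 0, ?_⟩
  rintro _ ⟨n, rfl⟩
  rcases n.eq_zero_or_pos with rfl | hn
  · simp
  have hlog : n * b ≤ ruelleLogSup μ f n :=
    ((Real.le_log_iff_exp_le (ruelle_iterate_one_pos hf n fun _ => a)).2
      (exp_mul_le_ruelle_iterate_one hf (fun y => hb ⟨y, rfl⟩) n _)).trans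
      (log_ruelle_iterate_le_ruelleLogSup μ hf n _)
  rw [le_div_iff₀ (by exact_mod_cast hn)]
  nlinarith [min_le_left b 0]

end Pressure

theorem pressure_exists_uniformly_general
    {M : Type*} [MetricSpace M] [CompactSpace M] [MeasurableSpace M] [BorelSpace M]
    (μ : Measure M) [IsProbabilityMeasure μ]
    (f : (ℕ → M) → ℝ) (hf : Continuous f) :
    ∃ p : ℝ, TendstoUniformly
      (fun (n : ℕ) (x : ℕ → M) => (n : ℝ)⁻¹ * Real.log ((Ruelle μ f)^[n] 1 x))
      (fun _ => p) atTop := by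
  have hsup := (subadditive_ruelleLogSup μ hf).tendsto_lim (bddBelow_ruelleLogSup_div μ hf)
  have hvar : Tendsto (fun n : ℕ => (n : ℝ)⁻¹ * ∑ j ∈ Finset.range n, variation f (j + 1))
      atTop (𝓝 0) := ((tendsto_variation hf).comp (tendsto_add_atTop_nat 1)).cesaro
  refine ⟨_, tendstoUniformly_const_of_le_of_le (by simpa using hsup.sub hvar) hsup
    (fun n x => ?_) (fun n x => ?_)⟩
  · rw [div_eq_inv_mul, ← mul_sub]
    exact mul_le_mul_of_nonneg_left
      (by linarith [ruelleLogSup_le_log_add μ hf n x]) (inv_nonneg.2 n.cast_nonneg)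
  · rw [div_eq_inv_mul]
    exact mul_le_mul_of_nonneg_left (log_ruelle_iterate_le_ruelleLogSup μ hf n x)
      (inv_nonneg.2 n.cast_nonneg)

/-- Uniform existence of the pressure for continuous potentials (absence of
metastable states on the lattice ℕ). -/
theorem pressure_exists_uniformly
    {M : Type*} [MetricSpace M] [CompactSpace M] [MeasurableSpace M] [BorelSpace M]
    (μ : Measure M) [IsProbabilityMeasure μ]
    (hfull : ∀ U : Set M, IsOpen U → U.Nonempty → 0 < μ U)
    (f : (ℕ → M) → ℝ) (hf : Continuous f) :
    ∃ p : ℝ, TendstoUniformly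
      (fun (n : ℕ) (x : ℕ → M) => (n : ℝ)⁻¹ * Real.log ((Ruelle μ f)^[n] 1 x))
      (fun _ => p) atTop :=
  pressure_exists_uniformly_general μ f hf
end

section
/- Derivative of the pressure in the direction of a Hölder potential: Let 0<α<1 and let f,φ:Ω→ℝ be α-Hölder. Suppose λ_f>0, a strictly positive continuous function h_f with ∫_Ω h_f dν_f = 1, and a Borel probability measure ν_f satisfy L_f h_f = λ_f h_f, ∫_Ω (L_f ψ) dν_f = λ_f ∫_Ω ψ dν_f for every continuous ψ, and ‖λ_f^{-n} L_f^n ψ − h_f ∫_Ω ψ dν_f‖₀ → 0 for every continuous ψ. For each real t let P(f+tφ) be the real number (which exists) such that ‖(1/n) log(L_{f+tφ}^n 𝟙) − P(f+tφ)‖₀ → 0. Then the map t ↦ P(f+tφ) is differentiable at t=0 and its derivative equals ∫_Ω φ·h_f dν_f. -/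
open MeasureTheory Filter Topology

/-!
Normalize `f` by its eigendata: `g = f + log h - log h ∘ σ - log λ` gives a Markov operator
`T = L_g` (`T 𝟙 = 𝟙`), and conjugating by `h` turns the decay hypothesis into `Tᵏ(φ - c) → 0`
uniformly, where `c = ∫ φ h dν`. The same conjugation shows `P(f + tφ) = log λ + t c + Λ(t)`, with
`Λ(t)` the growth rate of `Tⁿ exp(t Sₙ(φ - c)) = L_{g + t(φ - c)}ⁿ 𝟙`.
Jensen's inequality for `T` gives `Λ(t) ≥ (t/n) Tⁿ Sₙ(φ - c)`, and the right side is a Cesàro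
mean of the `Tᵏ(φ - c)`, so `Λ ≥ 0`. For the upper bound fix `N` with `|T^N S_N(φ - c)| ≤ N ε`;
then `e^u ≤ 1 + u + u²` gives `T^N exp(t S_N(φ - c)) ≤ 1 + |t| N ε + O(t²)`, and
submultiplicativity of `n ↦ L_{g + t(φ - c)}ⁿ 𝟙` yields `Λ(t) ≤ ε |t| + O(t²)`.
Hence `P(f + tφ) - P(f) - t c = Λ(t) = o(t)`.
-/

section SequenceSpace

variable {M : Type*}

@[simp]
lemma shift_consSeq (a : M) (x : ℕ → M) : shift (consSeq a x) = x := rfl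

lemma birkhoff_succ (φ : (ℕ → M) → ℝ) (n : ℕ) (x : ℕ → M) :
    birkhoff φ (n + 1) x = φ x + birkhoff φ n (shift x) := by
  simp only [birkhoff, Finset.sum_range_succ', Function.iterate_succ_apply,
    Function.iterate_zero_apply]
  ring

lemma birkhoff_const_mul (t : ℝ) (φ : (ℕ → M) → ℝ) (n : ℕ) :
    birkhoff (fun y => t * φ y) n = fun x => t * birkhoff φ n x := by
  funext x; simp [birkhoff, Finset.mul_sum]

lemma abs_birkhoff_le {φ : (ℕ → M) → ℝ} {D : ℝ} (hD : ∀ x, |φ x| ≤ D) (n : ℕ) (x : ℕ → M) :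
    |birkhoff φ n x| ≤ n * D := by
  calc |birkhoff φ n x| ≤ ∑ j ∈ Finset.range n, |φ (shift^[j] x)| :=
        Finset.abs_sum_le_sum_abs _ _
    _ ≤ n * D := by
        simpa using Finset.sum_le_card_nsmul (Finset.range n) _ _ fun j _ => hD (shift^[j] x)

variable [TopologicalSpace M]

@[fun_prop]
lemma Continuous.consSeq {X : Type*} [TopologicalSpace X] {a : X → M} {x : X → ℕ → M}
    (ha : Continuous a) (hx : Continuous x) : Continuous fun z => consSeq (a z) (x z) :=
  continuous_pi fun n => by
    cases n with
    | zero => exact ha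
    | succ n => exact (continuous_apply n).comp hx

lemma continuous_shift : Continuous (shift : (ℕ → M) → ℕ → M) :=
  continuous_pi fun n => continuous_apply (n + 1)

@[fun_prop]
lemma continuous_birkhoff {φ : (ℕ → M) → ℝ} (hφ : Continuous φ) (n : ℕ) :
    Continuous (birkhoff φ n) :=
  continuous_finsetSum _ fun j _ => hφ.comp (continuous_shift.iterate j)

end SequenceSpace

section Holder

variable {M : Type*} [MetricSpace M]

lemma dOmega_self (x : ℕ → M) : dOmega x x = 0 := by
  simp [dOmega]

variable [CompactSpace M]

lemma continuous_dOmega (x : ℕ → M) : Continuous (dOmega x) := by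
  set D := Metric.diam (Set.univ : Set M)
  refine continuous_tsum (u := fun n => (1 / 2 : ℝ) ^ (n + 1) * D) (fun n => by fun_prop)
    ((summable_geometric_two.mul_left (1 / 2)).mul_right D |>.congr fun n => by ring)
    fun n y => ?_
  rw [Real.norm_of_nonneg (by positivity)]
  exact mul_le_mul_of_nonneg_left
    (Metric.dist_le_diam_of_mem isCompact_univ.isBounded trivial trivial) (by positivity)

lemma IsHolder.continuous {α : ℝ} {f : (ℕ → M) → ℝ} (hα : 0 < α) (hf : IsHolder α f) :
    Continuous f := by
  obtain ⟨C, -, hC⟩ := hf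
  refine continuous_iff_continuousAt.2 fun x => tendsto_iff_norm_sub_tendsto_zero.2 ?_
  have hd : Tendsto (fun y => dOmega x y ^ α) (𝓝 x) (𝓝 0) := by
    have := (Real.continuousAt_rpow_const 0 α (Or.inr hα.le)).tendsto.comp
      (dOmega_self x ▸ (continuous_dOmega x).tendsto x)
    simpa [Function.comp_def, Real.zero_rpow hα.ne'] using this
  refine squeeze_zero (fun _ => norm_nonneg _) (fun y => ?_) (by simpa using hd.const_mul C)
  rw [Real.norm_eq_abs, abs_sub_comm]
  exact hC x y

end Holder

section RuelleAlgebra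

variable {M : Type*} [MeasurableSpace M] (μ : Measure M)

lemma Ruelle_const_mul (p ψ : (ℕ → M) → ℝ) (r : ℝ) :
    Ruelle μ p (fun y => r * ψ y) = fun x => r * Ruelle μ p ψ x := by
  funext x
  simp only [Ruelle, ← integral_const_mul]
  congr 1; funext a; ring

lemma Ruelle_comp_shift_mul (p ψ χ : (ℕ → M) → ℝ) :
    Ruelle μ p (fun y => χ (shift y) * ψ y) = fun x => χ x * Ruelle μ p ψ x := by
  funext x
  simp only [Ruelle, shift_consSeq, ← integral_const_mul]
  congr 1; funext a; ring

lemma Ruelle_add_potential (p q ψ : (ℕ → M) → ℝ) :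
    Ruelle μ (fun y => p y + q y) ψ = Ruelle μ p (fun y => Real.exp (q y) * ψ y) := by
  funext x
  simp only [Ruelle, Real.exp_add, mul_assoc]

lemma iterate_Ruelle_const_mul (p ψ : (ℕ → M) → ℝ) (r : ℝ) (n : ℕ) :
    (Ruelle μ p)^[n] (fun y => r * ψ y) = fun x => r * (Ruelle μ p)^[n] ψ x := by
  induction n generalizing ψ with
  | zero => rfl
  | succ n ih => simp only [Function.iterate_succ_apply, Ruelle_const_mul, ih]

lemma iterate_Ruelle_add_potential (p q ψ : (ℕ → M) → ℝ) (n : ℕ) :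
    (Ruelle μ (fun y => p y + q y))^[n] ψ
      = (Ruelle μ p)^[n] (fun y => Real.exp (birkhoff q n y) * ψ y) := by
  induction n generalizing ψ with
  | zero => simp [birkhoff]
  | succ n ih =>
      rw [Function.iterate_succ_apply, ih, Ruelle_add_potential, Function.iterate_succ_apply,
        ← Ruelle_comp_shift_mul]
      congr 2; funext y
      rw [birkhoff_succ, Real.exp_add]; ring

end RuelleAlgebra

section RuelleOrder

variable {M : Type*} [MetricSpace M] [CompactSpace M] [MeasurableSpace M] [OpensMeasurableSpace M]
  (μ : Measure M) [IsFiniteMeasure μ] {p : (ℕ → M) → ℝ}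

lemma integrable_Ruelle_integrand (hp : Continuous p) {ψ : (ℕ → M) → ℝ} (hψ : Continuous ψ)
    (x : ℕ → M) : Integrable (fun a => Real.exp (p (consSeq a x)) * ψ (consSeq a x)) μ :=
  (by fun_prop : Continuous _).integrable_of_hasCompactSupport (.of_compactSpace _)

lemma continuous_Ruelle (hp : Continuous p) {ψ : (ℕ → M) → ℝ} (hψ : Continuous ψ) :
    Continuous (Ruelle μ p ψ) := by
  have := continuous_parametric_integral_of_continuous (μ := μ)
    (f := fun x a => Real.exp (p (consSeq a x)) * ψ (consSeq a x)) (by fun_prop) isCompact_univ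
  simp only [Measure.restrict_univ] at this
  exact this

lemma Ruelle_mono (hp : Continuous p) {ψ₁ ψ₂ : (ℕ → M) → ℝ} (hψ₁ : Continuous ψ₁)
    (hψ₂ : Continuous ψ₂) (hle : ψ₁ ≤ ψ₂) : Ruelle μ p ψ₁ ≤ Ruelle μ p ψ₂ := fun x =>
  integral_mono (integrable_Ruelle_integrand μ hp hψ₁ x) (integrable_Ruelle_integrand μ hp hψ₂ x)
    fun _ => mul_le_mul_of_nonneg_left (hle _) (Real.exp_pos _).le

lemma Ruelle_pos [NeZero μ] (hp : Continuous p) {ψ : (ℕ → M) → ℝ} (hψ : Continuous ψ)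
    (hψ0 : ∀ y, 0 < ψ y) (x : ℕ → M) : 0 < Ruelle μ p ψ x := by
  have hpos : ∀ a, 0 < Real.exp (p (consSeq a x)) * ψ (consSeq a x) := fun a =>
    mul_pos (Real.exp_pos _) (hψ0 _)
  refine (integral_pos_iff_support_of_nonneg (fun a => (hpos a).le)
    (integrable_Ruelle_integrand μ hp hψ x)).2 ?_
  simpa [Function.support, fun a => (hpos a).ne'] using NeZero.ne μ

lemma Ruelle_add (hp : Continuous p) {ψ χ : (ℕ → M) → ℝ} (hψ : Continuous ψ)
    (hχ : Continuous χ) :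
    Ruelle μ p (fun y => ψ y + χ y) = fun x => Ruelle μ p ψ x + Ruelle μ p χ x := by
  funext x
  simp only [Ruelle, ← integral_add (integrable_Ruelle_integrand μ hp hψ x)
    (integrable_Ruelle_integrand μ hp hχ x), mul_add]

lemma continuous_iterate_Ruelle (hp : Continuous p) {ψ : (ℕ → M) → ℝ} (hψ : Continuous ψ)
    (n : ℕ) : Continuous ((Ruelle μ p)^[n] ψ) := by
  induction n with
  | zero => exact hψ
  | succ n ih => simpa only [Function.iterate_succ_apply'] using continuous_Ruelle μ hp ih

lemma iterate_Ruelle_mono (hp : Continuous p) {ψ₁ ψ₂ : (ℕ → M) → ℝ} (hψ₁ : Continuous ψ₁)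
    (hψ₂ : Continuous ψ₂) (hle : ψ₁ ≤ ψ₂) (n : ℕ) :
    (Ruelle μ p)^[n] ψ₁ ≤ (Ruelle μ p)^[n] ψ₂ := by
  induction n generalizing ψ₁ ψ₂ with
  | zero => exact hle
  | succ n ih =>
      exact ih (continuous_Ruelle μ hp hψ₁) (continuous_Ruelle μ hp hψ₂)
        (Ruelle_mono μ hp hψ₁ hψ₂ hle)

lemma iterate_Ruelle_pos [NeZero μ] (hp : Continuous p) {ψ : (ℕ → M) → ℝ}
    (hψ : Continuous ψ) (hψ0 : ∀ y, 0 < ψ y) (n : ℕ) (x : ℕ → M) :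
    0 < (Ruelle μ p)^[n] ψ x := by
  induction n generalizing ψ with
  | zero => exact hψ0 x
  | succ n ih => exact ih (continuous_Ruelle μ hp hψ) (Ruelle_pos μ hp hψ hψ0)

lemma iterate_Ruelle_add (hp : Continuous p) {ψ χ : (ℕ → M) → ℝ} (hψ : Continuous ψ)
    (hχ : Continuous χ) (n : ℕ) :
    (Ruelle μ p)^[n] (fun y => ψ y + χ y)
      = fun x => (Ruelle μ p)^[n] ψ x + (Ruelle μ p)^[n] χ x := by
  induction n generalizing ψ χ with
  | zero => rfl
  | succ n ih =>
      simp only [Function.iterate_succ_apply, Ruelle_add μ hp hψ hχ,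
        ih (continuous_Ruelle μ hp hψ) (continuous_Ruelle μ hp hχ)]

lemma iterate_Ruelle_one_le_pow (hp : Continuous p) {N : ℕ} {γ : ℝ} (hγ : 0 ≤ γ)
    (hN : ∀ x, (Ruelle μ p)^[N] 1 x ≤ γ) (k : ℕ) (x : ℕ → M) :
    (Ruelle μ p)^[k * N] 1 x ≤ γ ^ k := by
  induction k generalizing x with
  | zero => simp
  | succ k ih =>
      have hle : (Ruelle μ p)^[N] 1 ≤ fun y => γ * (1 : (ℕ → M) → ℝ) y := fun y => by
        simpa using hN y
      have hmono := iterate_Ruelle_mono μ hp (continuous_iterate_Ruelle μ hp continuous_const N)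
        (by fun_prop) hle (k * N) x
      rw [iterate_Ruelle_const_mul] at hmono
      calc (Ruelle μ p)^[(k + 1) * N] 1 x = (Ruelle μ p)^[k * N] ((Ruelle μ p)^[N] 1) x := by
            rw [Nat.succ_mul, Function.iterate_add_apply]
        _ ≤ γ * (Ruelle μ p)^[k * N] 1 x := hmono
        _ ≤ γ ^ (k + 1) := by rw [pow_succ']; exact mul_le_mul_of_nonneg_left (ih x) hγ

end RuelleOrder

noncomputable def normalizedPotential {M : Type*} (p h : (ℕ → M) → ℝ) (k : ℝ) :
    (ℕ → M) → ℝ :=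
  fun y => p y + (Real.log (h y) - Real.log (h (shift y)) - Real.log k)

section Normalization

variable {M : Type*} {p h : (ℕ → M) → ℝ} {k : ℝ}

lemma normalizedPotential_add_mul (hk : 0 < k) (φ : (ℕ → M) → ℝ) (t c : ℝ) :
    normalizedPotential (fun y => p y + t * φ y) h (k * Real.exp (t * c))
      = fun y => normalizedPotential p h k y + t * (φ y - c) := by
  funext y
  simp only [normalizedPotential, Real.log_mul hk.ne' (Real.exp_pos _).ne', Real.log_exp]
  ring

lemma continuous_normalizedPotential [TopologicalSpace M] (hp : Continuous p)
    (hhc : Continuous h) (hh : ∀ x, 0 < h x) : Continuous (normalizedPotential p h k) :=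
  hp.add (((hhc.log fun x => (hh x).ne').sub
    ((hhc.comp continuous_shift).log fun _ => (hh _).ne')).sub continuous_const)

variable [MeasurableSpace M] (μ : Measure M)

lemma Ruelle_mul_eq (hh : ∀ x, 0 < h x) (hk : 0 < k) (ψ : (ℕ → M) → ℝ) :
    Ruelle μ p (fun y => h y * ψ y)
      = fun x => k * h x * Ruelle μ (normalizedPotential p h k) ψ x := by
  have hexp : ∀ y, Real.exp (Real.log (h y) - Real.log (h (shift y)) - Real.log k) * ψ y
      = (k * h (shift y))⁻¹ * (h y * ψ y) := fun y => by
    rw [Real.exp_sub, Real.exp_sub, Real.exp_log (hh _), Real.exp_log (hh _), Real.exp_log hk]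
    field_simp
  funext x
  unfold normalizedPotential
  rw [Ruelle_add_potential, funext hexp,
    Ruelle_comp_shift_mul μ p (fun y => h y * ψ y) fun z => (k * h z)⁻¹]
  field_simp [(hh x).ne']

lemma iterate_Ruelle_mul_eq (hh : ∀ x, 0 < h x) (hk : 0 < k) (ψ : (ℕ → M) → ℝ) (n : ℕ) :
    (Ruelle μ p)^[n] (fun y => h y * ψ y)
      = fun x => k ^ n * h x * (Ruelle μ (normalizedPotential p h k))^[n] ψ x := by
  induction n generalizing ψ with
  | zero => simp
  | succ n ih =>
      rw [Function.iterate_succ_apply, Ruelle_mul_eq μ hh hk]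
      simp only [mul_assoc, ih, iterate_Ruelle_const_mul, ← Function.iterate_succ_apply, pow_succ]
      funext x; ring

lemma Ruelle_normalizedPotential_one (hh : ∀ x, 0 < h x) (hk : 0 < k)
    (heig : Ruelle μ p h = fun x => k * h x) : Ruelle μ (normalizedPotential p h k) 1 = 1 := by
  funext x
  have := congrFun (Ruelle_mul_eq μ (p := p) hh hk 1) x
  simp only [Pi.one_apply, mul_one, heig] at this
  exact (mul_right_eq_self₀.1 this.symm).resolve_right (mul_pos hk (hh x)).ne'

lemma tendstoUniformly_iterate_normalizedPotential {ψ : (ℕ → M) → ℝ} {m : ℝ} (hm : 0 < m)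
    (hh : ∀ x, m ≤ h x) (hk : 0 < k)
    (hconv : TendstoUniformly
      (fun (n : ℕ) x => (k ^ n)⁻¹ * (Ruelle μ p)^[n] (fun y => h y * ψ y) x) 0 atTop) :
    TendstoUniformly (fun n => (Ruelle μ (normalizedPotential p h k))^[n] ψ) 0 atTop := by
  rw [Metric.tendstoUniformly_iff] at hconv ⊢
  intro ε hε
  filter_upwards [hconv (ε * m) (by positivity)] with n hn x
  have hx := hn x
  rw [iterate_Ruelle_mul_eq μ (fun x => hm.trans_le (hh x)) hk, ← mul_assoc,
    inv_mul_cancel_left₀ (pow_pos hk n).ne'] at hx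
  simp only [Pi.zero_apply, dist_zero_left, Real.norm_eq_abs, abs_mul,
    abs_of_pos (hm.trans_le (hh x))] at hx ⊢
  nlinarith [hh x, abs_nonneg ((Ruelle μ (normalizedPotential p h k))^[n] ψ x)]

end Normalization

section MarkovOperator

variable {M : Type*} [MeasurableSpace M] (μ : Measure M) {g : (ℕ → M) → ℝ}

lemma iterate_Ruelle_const (hg1 : Ruelle μ g 1 = 1) (K : ℝ) (n : ℕ) :
    (Ruelle μ g)^[n] (fun _ => K) = fun _ => K := by
  refine Function.iterate_fixed ?_ n
  simpa [hg1] using Ruelle_const_mul μ g 1 K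

lemma Ruelle_comp_shift (hg1 : Ruelle μ g 1 = 1) (χ : (ℕ → M) → ℝ) :
    Ruelle μ g (fun y => χ (shift y)) = χ := by
  simpa [hg1] using Ruelle_comp_shift_mul μ g 1 χ

variable [MetricSpace M] [CompactSpace M] [OpensMeasurableSpace M] [IsFiniteMeasure μ]

lemma iterate_Ruelle_affine (hg : Continuous g) (hg1 : Ruelle μ g 1 = 1)
    {F : (ℕ → M) → ℝ} (hF : Continuous F) (a b : ℝ) (n : ℕ) :
    (Ruelle μ g)^[n] (fun y => a + b * F y) = fun x => a + b * (Ruelle μ g)^[n] F x := by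
  rw [iterate_Ruelle_add μ hg (ψ := fun _ => a) (χ := fun y => b * F y) continuous_const
    (by fun_prop), iterate_Ruelle_const μ hg1, iterate_Ruelle_const_mul]

lemma abs_iterate_Ruelle_le (hg : Continuous g) (hg1 : Ruelle μ g 1 = 1)
    {ψ : (ℕ → M) → ℝ} (hψ : Continuous ψ) {K : ℝ} (hK : ∀ y, |ψ y| ≤ K) (n : ℕ)
    (x : ℕ → M) : |(Ruelle μ g)^[n] ψ x| ≤ K := by
  have hlow := iterate_Ruelle_mono μ hg continuous_const hψ (fun y => (abs_le.1 (hK y)).1) n x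
  have hup := iterate_Ruelle_mono μ hg hψ continuous_const (fun y => (abs_le.1 (hK y)).2) n x
  rw [iterate_Ruelle_const μ hg1] at hlow hup
  exact abs_le.2 ⟨hlow, hup⟩

lemma iterate_Ruelle_birkhoff (hg : Continuous g) (hg1 : Ruelle μ g 1 = 1)
    {φ : (ℕ → M) → ℝ} (hφ : Continuous φ) (n : ℕ) :
    (Ruelle μ g)^[n] (birkhoff φ n)
      = fun x => ∑ k ∈ Finset.range n, (Ruelle μ g)^[k + 1] φ x := by
  induction n with
  | zero => funext x; simp [birkhoff]
  | succ n ih =>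
      have hstep : Ruelle μ g (birkhoff φ (n + 1))
          = fun x => Ruelle μ g φ x + birkhoff φ n x := by
        rw [funext (birkhoff_succ φ n), Ruelle_add μ hg (χ := fun y => birkhoff φ n (shift y)) hφ
          ((continuous_birkhoff hφ n).comp continuous_shift), Ruelle_comp_shift μ hg1]
      rw [Function.iterate_succ_apply, hstep, iterate_Ruelle_add μ hg (continuous_Ruelle μ hg hφ)
        (continuous_birkhoff hφ n), ih]
      funext x
      rw [Finset.sum_range_succ, ← Function.iterate_succ_apply, add_comm]

lemma exp_iterate_Ruelle_birkhoff_le (hg : Continuous g) (hg1 : Ruelle μ g 1 = 1)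
    {φ : (ℕ → M) → ℝ} (hφ : Continuous φ) (t : ℝ) (n : ℕ) (x : ℕ → M) :
    Real.exp (t * (Ruelle μ g)^[n] (birkhoff φ n) x)
      ≤ (Ruelle μ (fun y => g y + t * φ y))^[n] 1 x := by
  set s := t * (Ruelle μ g)^[n] (birkhoff φ n) x
  have htangent : (fun y => Real.exp s * (1 - s) + Real.exp s * t * birkhoff φ n y)
      ≤ fun y => Real.exp (birkhoff (fun y => t * φ y) n y) * 1 := fun y => by
    have := Real.add_one_le_exp (t * birkhoff φ n y - s)
    simp only [birkhoff_const_mul, mul_one]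
    rw [show t * birkhoff φ n y = s + (t * birkhoff φ n y - s) by ring, Real.exp_add]
    nlinarith [Real.exp_pos s]
  have := iterate_Ruelle_mono μ hg (by fun_prop) (by simp only [birkhoff_const_mul]; fun_prop)
    htangent n x
  rw [iterate_Ruelle_affine μ hg hg1 (continuous_birkhoff hφ n), ← iterate_Ruelle_add_potential]
    at this
  calc Real.exp s
      = Real.exp s * (1 - s) + Real.exp s * t * (Ruelle μ g)^[n] (birkhoff φ n) x := by
        simp only [s]; ring
    _ ≤ _ := this

lemma iterate_Ruelle_tilt_le (hg : Continuous g) (hg1 : Ruelle μ g 1 = 1)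
    {φ : (ℕ → M) → ℝ} (hφ : Continuous φ) {D : ℝ} (hD : ∀ y, |φ y| ≤ D) {t : ℝ} {N : ℕ}
    (ht : |t| * (N * D) ≤ 1) (x : ℕ → M) :
    (Ruelle μ (fun y => g y + t * φ y))^[N] 1 x
      ≤ 1 + t ^ 2 * (N * D) ^ 2 + t * (Ruelle μ g)^[N] (birkhoff φ N) x := by
  have hquad : (fun y => Real.exp (birkhoff (fun y => t * φ y) N y) * 1)
      ≤ fun y => 1 + t ^ 2 * (N * D) ^ 2 + t * birkhoff φ N y := fun y => by
    have hu : |t * birkhoff φ N y| ≤ |t| * (N * D) := by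
      rw [abs_mul]; exact mul_le_mul_of_nonneg_left (abs_birkhoff_le hD N y) (abs_nonneg t)
    have hsq : (t * birkhoff φ N y) ^ 2 ≤ t ^ 2 * (N * D) ^ 2 := by
      calc (t * birkhoff φ N y) ^ 2 = |t * birkhoff φ N y| ^ 2 := (sq_abs _).symm
        _ ≤ (|t| * (N * D)) ^ 2 := pow_le_pow_left₀ (abs_nonneg _) hu 2
        _ = t ^ 2 * (N * D) ^ 2 := by rw [mul_pow, sq_abs]
    have := (abs_le.1 (Real.abs_exp_sub_one_sub_id_le (hu.trans ht))).2
    simp only [birkhoff_const_mul, mul_one]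
    linarith
  have := iterate_Ruelle_mono μ hg (by simp only [birkhoff_const_mul]; fun_prop)
    (by fun_prop) hquad N x
  rwa [← iterate_Ruelle_add_potential, iterate_Ruelle_affine μ hg hg1 (continuous_birkhoff hφ N)]
    at this

end MarkovOperator

section Limits

lemma tendstoUniformly_cesaro {X : Type*} {u : ℕ → X → ℝ} {D : ℝ} (hD : ∀ k x, |u k x| ≤ D)
    (hu : TendstoUniformly u 0 atTop) :
    TendstoUniformly (fun (n : ℕ) x => (n : ℝ)⁻¹ * ∑ k ∈ Finset.range n, u k x) 0 atTop := by
  rw [Metric.tendstoUniformly_iff] at hu ⊢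
  intro ε hε
  obtain ⟨N, hN⟩ := eventually_atTop.1 (hu (ε / 2) (half_pos hε))
  set b : ℕ → ℝ := fun k => if k < N then D else ε / 2
  have hub : ∀ k x, |u k x| ≤ b k := fun k x => by
    by_cases hk : k < N
    · simpa [b, hk] using hD k x
    · simpa [b, hk] using (hN k (not_lt.1 hk) x).le
  have hb : Tendsto (fun n : ℕ => (n : ℝ)⁻¹ * ∑ k ∈ Finset.range n, b k) atTop (𝓝 (ε / 2)) := by
    refine Tendsto.cesaro (tendsto_const_nhds.congr' ?_)
    filter_upwards [eventually_ge_atTop N] with k hk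
    simp [b, not_lt.2 hk]
  filter_upwards [hb.eventually (gt_mem_nhds (half_lt_self hε))] with n hn x
  rw [Pi.zero_apply, dist_zero_left, Real.norm_eq_abs, abs_mul, abs_inv, Nat.abs_cast]
  calc (n : ℝ)⁻¹ * |∑ k ∈ Finset.range n, u k x|
      ≤ (n : ℝ)⁻¹ * ∑ k ∈ Finset.range n, b k := by
        gcongr
        exact (Finset.abs_sum_le_sum_abs _ _).trans (Finset.sum_le_sum fun k _ => hub k x)
    _ < ε := hn

lemma tendsto_inv_mul_log_of_bounds {a b : ℕ → ℝ} {K m m' P : ℝ} (ha : ∀ n, 0 < a n)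
    (hK : 0 < K) (hm : 0 < m) (hlow : ∀ n, m * K ^ n * a n ≤ b n)
    (hup : ∀ n, b n ≤ m' * K ^ n * a n)
    (hlim : Tendsto (fun n : ℕ => (n : ℝ)⁻¹ * Real.log (a n)) atTop (𝓝 P)) :
    Tendsto (fun n : ℕ => (n : ℝ)⁻¹ * Real.log (b n)) atTop (𝓝 (P + Real.log K)) := by
  have hKa : ∀ n, 0 < K ^ n * a n := fun n => mul_pos (pow_pos hK n) (ha n)
  set r : ℕ → ℝ := fun n => b n / (K ^ n * a n)
  have hmr : ∀ n, m ≤ r n := fun n => (le_div_iff₀ (hKa n)).2 (by simpa [mul_assoc] using hlow n)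
  have hrm : ∀ n, r n ≤ m' := fun n => (div_le_iff₀ (hKa n)).2 (by simpa [mul_assoc] using hup n)
  have hr : ∀ n, |Real.log (r n)| ≤ max |Real.log m| |Real.log m'| := fun n => by
    refine abs_le.2 ⟨?_, ?_⟩
    · linarith [Real.log_le_log hm (hmr n), neg_abs_le (Real.log m),
        le_max_left |Real.log m| |Real.log m'|]
    · linarith [Real.log_le_log (hm.trans_le (hmr n)) (hrm n), le_abs_self (Real.log m'),
        le_max_right |Real.log m| |Real.log m'|]
  have hr0 : Tendsto (fun n : ℕ => (n : ℝ)⁻¹ * Real.log (r n)) atTop (𝓝 0) := by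
    refine squeeze_zero_norm (fun n => ?_)
      (by simpa using tendsto_inv_atTop_nhds_zero_nat.mul_const (max |Real.log m| |Real.log m'|))
    rw [norm_mul, norm_inv, Real.norm_natCast, Real.norm_eq_abs]
    exact mul_le_mul_of_nonneg_left (hr n) (by positivity)
  have hsum := (hlim.add_const (Real.log K)).add hr0
  rw [add_zero] at hsum
  refine hsum.congr' ?_
  filter_upwards [eventually_ge_atTop 1] with n hn
  have hb : b n = K ^ n * a n * r n := by
    simp only [r]; field_simp [(hKa n).ne', (ha n).ne']
  rw [hb, Real.log_mul (hKa n).ne' (hm.trans_le (hmr n)).ne',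
    Real.log_mul (pow_pos hK n).ne' (ha n).ne', Real.log_pow]
  field_simp
  ring

lemma le_log_div_of_tendsto_inv_mul_log {a : ℕ → ℝ} {N : ℕ} {γ Λ : ℝ} (hN : 0 < N)
    (ha : ∀ n, 0 < a n) (hγ : ∀ k, a (k * N) ≤ γ ^ k)
    (hlim : Tendsto (fun n : ℕ => (n : ℝ)⁻¹ * Real.log (a n)) atTop (𝓝 Λ)) :
    Λ ≤ Real.log γ / N := by
  refine le_of_tendsto (hlim.comp (tendsto_id.atTop_mul_const' hN)) ?_
  filter_upwards [eventually_ge_atTop 1] with k hk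
  have hlog : Real.log (a (k * N)) ≤ k * Real.log γ := by
    rw [← Real.log_pow]; exact Real.log_le_log (ha _) (hγ k)
  calc ((k * N : ℕ) : ℝ)⁻¹ * Real.log (a (k * N)) ≤ ((k * N : ℕ) : ℝ)⁻¹ * (k * Real.log γ) :=
        mul_le_mul_of_nonneg_left hlog (by positivity)
    _ = Real.log γ / N := by
        have : (k : ℝ) ≠ 0 := by positivity
        push_cast; field_simp

lemma hasDerivAt_of_sandwich {P : ℝ → ℝ} {a c : ℝ} (hlow : ∀ t, 0 ≤ P t - a - t * c)
    (hup : ∀ ε > 0, ∃ K, ∀ᶠ t in 𝓝 0, P t - a - t * c ≤ ε * |t| + K * t ^ 2) :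
    HasDerivAt P c 0 := by
  have hP0 : P 0 = a := by
    obtain ⟨K, hK⟩ := hup 1 one_pos
    have := hK.self_of_nhds
    simp only [zero_mul, sub_zero, abs_zero, mul_zero, add_zero, ne_eq, OfNat.ofNat_ne_zero,
      not_false_eq_true, zero_pow] at this
    linarith [hlow 0]
  rw [hasDerivAt_iff_isLittleO, Asymptotics.isLittleO_iff]
  intro C hC
  obtain ⟨K, hK⟩ := hup (C / 2) (half_pos hC)
  have hsmall : ∀ᶠ t in 𝓝 (0 : ℝ), |t| * (|K| + 1) ≤ C / 2 := by
    have : Tendsto (fun t : ℝ => |t| * (|K| + 1)) (𝓝 0) (𝓝 0) := by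
      exact (continuous_abs.mul continuous_const).tendsto' 0 0 (by simp)
    exact this.eventually (eventually_le_nhds (half_pos hC))
  filter_upwards [hK, hsmall] with t ht hts
  rw [hP0, sub_zero, smul_eq_mul, Real.norm_eq_abs, Real.norm_eq_abs,
    abs_of_nonneg (hlow t)]
  have hKt : K * t ^ 2 ≤ |t| * (C / 2) := by
    calc K * t ^ 2 ≤ |K| * |t| * |t| := by
          rw [mul_assoc, abs_mul_abs_self, ← sq]
          exact mul_le_mul_of_nonneg_right (le_abs_self K) (sq_nonneg t)
      _ ≤ (|K| + 1) * |t| * |t| := by gcongr; linarith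
      _ ≤ |t| * (C / 2) := by nlinarith [abs_nonneg t]
  linarith

end Limits

section TiltedPressure

variable {M : Type*} [MetricSpace M] [CompactSpace M] [MeasurableSpace M] [OpensMeasurableSpace M]
  (μ : Measure M) [IsFiniteMeasure μ] {g φ : (ℕ → M) → ℝ}

lemma tendstoUniformly_inv_mul_iterate_Ruelle_birkhoff (hg : Continuous g)
    (hg1 : Ruelle μ g 1 = 1) (hφ : Continuous φ)
    (hdecay : TendstoUniformly (fun k => (Ruelle μ g)^[k] φ) 0 atTop) :
    TendstoUniformly (fun (n : ℕ) x => (n : ℝ)⁻¹ * (Ruelle μ g)^[n] (birkhoff φ n) x) 0 atTop := by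
  obtain ⟨D, hD⟩ := isCompact_univ.exists_bound_of_continuousOn hφ.continuousOn
  simp only [iterate_Ruelle_birkhoff μ hg hg1 hφ]
  exact tendstoUniformly_cesaro
    (fun k x => abs_iterate_Ruelle_le μ hg hg1 hφ (fun y => hD y trivial) (k + 1) x)
    (tendstoUniformly_iff_seq_tendstoUniformly.1 hdecay _ (tendsto_add_atTop_nat 1))

lemma tiltedPressure_nonneg (hg : Continuous g) (hg1 : Ruelle μ g 1 = 1) (hφ : Continuous φ)
    (hdecay : TendstoUniformly (fun k => (Ruelle μ g)^[k] φ) 0 atTop) {x₀ : ℕ → M} {t Λ : ℝ}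
    (hΛ : Tendsto (fun n : ℕ => (n : ℝ)⁻¹
      * Real.log ((Ruelle μ (fun y => g y + t * φ y))^[n] 1 x₀)) atTop (𝓝 Λ)) :
    0 ≤ Λ := by
  have hmean := ((tendstoUniformly_inv_mul_iterate_Ruelle_birkhoff μ hg hg1 hφ hdecay).tendsto_at
    x₀).const_mul t
  rw [Pi.zero_apply, mul_zero] at hmean
  refine le_of_tendsto_of_tendsto' hmean hΛ fun n => ?_
  have hjensen := exp_iterate_Ruelle_birkhoff_le μ hg hg1 hφ t n x₀
  rw [mul_left_comm]
  gcongr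
  simpa using Real.log_le_log (Real.exp_pos _) hjensen

lemma exists_tiltedPressure_le [NeZero μ] (hg : Continuous g) (hg1 : Ruelle μ g 1 = 1)
    (hφ : Continuous φ) (hdecay : TendstoUniformly (fun k => (Ruelle μ g)^[k] φ) 0 atTop)
    (x₀ : ℕ → M) {Λ : ℝ → ℝ} (hΛ : ∀ t, Tendsto (fun n : ℕ => (n : ℝ)⁻¹
      * Real.log ((Ruelle μ (fun y => g y + t * φ y))^[n] 1 x₀)) atTop (𝓝 (Λ t)))
    {ε : ℝ} (hε : 0 < ε) : ∃ K, ∀ᶠ t in 𝓝 0, Λ t ≤ ε * |t| + K * t ^ 2 := by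
  obtain ⟨D, hD⟩ := isCompact_univ.exists_bound_of_continuousOn hφ.continuousOn
  obtain ⟨N, hNε, hN⟩ := (((Metric.tendstoUniformly_iff.1
    (tendstoUniformly_inv_mul_iterate_Ruelle_birkhoff μ hg hg1 hφ hdecay)) ε hε).and
    (eventually_gt_atTop 0)).exists
  have hmeanN : ∀ x, |(Ruelle μ g)^[N] (birkhoff φ N) x| ≤ N * ε := fun x => by
    have := (hNε x).le
    rw [Pi.zero_apply, dist_zero_left, Real.norm_eq_abs, abs_mul, abs_inv, Nat.abs_cast,
      inv_mul_le_iff₀ (by positivity)] at this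
    exact this
  refine ⟨N * D ^ 2, ?_⟩
  have hsmall : ∀ᶠ t in 𝓝 (0 : ℝ), |t| * (N * D) ≤ 1 :=
    ((continuous_abs.mul continuous_const).tendsto' 0 0 (by simp)).eventually
      (eventually_le_nhds one_pos)
  filter_upwards [hsmall] with t ht
  have hgt : Continuous fun y => g y + t * φ y := by fun_prop
  set γ := 1 + t ^ 2 * (N * D) ^ 2 + |t| * (N * ε)
  have hγ : 0 < γ := by positivity
  have hZN : ∀ x, (Ruelle μ (fun y => g y + t * φ y))^[N] 1 x ≤ γ := fun x => by
    have hlin : t * (Ruelle μ g)^[N] (birkhoff φ N) x ≤ |t| * (N * ε) :=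
      (le_abs_self _).trans (abs_mul t _ ▸ mul_le_mul_of_nonneg_left (hmeanN x) (abs_nonneg t))
    linarith [iterate_Ruelle_tilt_le μ hg hg1 hφ (fun y => hD y trivial) ht x]
  have hΛγ := le_log_div_of_tendsto_inv_mul_log hN
    (iterate_Ruelle_pos μ hgt continuous_const (fun _ => one_pos) · x₀)
    (fun k => iterate_Ruelle_one_le_pow μ hgt hγ.le hZN k x₀) (hΛ t)
  calc Λ t ≤ Real.log γ / N := hΛγ
    _ ≤ (γ - 1) / N := by gcongr; exact Real.log_le_sub_one_of_pos hγ
    _ = ε * |t| + N * D ^ 2 * t ^ 2 := by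
        have : (N : ℝ) ≠ 0 := by positivity
        field_simp; ring

end TiltedPressure

lemma integral_mul_sub_integral_mul_eq_zero {X : Type*} [MeasurableSpace X] {ν : Measure X}
    {h φ : X → ℝ} (hh : Integrable h ν) (hφh : Integrable (fun y => φ y * h y) ν)
    (hnorm : ∫ x, h x ∂ν = 1) : ∫ y, h y * (φ y - ∫ x, φ x * h x ∂ν) ∂ν = 0 := by
  calc ∫ y, h y * (φ y - ∫ x, φ x * h x ∂ν) ∂ν
      = ∫ y, φ y * h y ∂ν - ∫ y, (∫ x, φ x * h x ∂ν) * h y ∂ν := by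
        rw [← integral_sub hφh (hh.const_mul _)]
        congr 1; funext y; ring
    _ = 0 := by rw [integral_const_mul, hnorm, mul_one, sub_self]

section Transfer

variable {M : Type*} [MetricSpace M] [CompactSpace M] [MeasurableSpace M] [OpensMeasurableSpace M]
  (μ : Measure M) [IsFiniteMeasure μ] {p h : (ℕ → M) → ℝ} {k : ℝ}

lemma tendsto_log_iterate_normalizedPotential [NeZero μ] (hp : Continuous p)
    (hhc : Continuous h) (hh : ∀ x, 0 < h x) (hk : 0 < k) (x₀ : ℕ → M) {P : ℝ}
    (hP : Tendsto (fun n : ℕ => (n : ℝ)⁻¹ * Real.log ((Ruelle μ p)^[n] 1 x₀)) atTop (𝓝 P)) :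
    Tendsto (fun n : ℕ => (n : ℝ)⁻¹
      * Real.log ((Ruelle μ (normalizedPotential p h k))^[n] 1 x₀)) atTop
      (𝓝 (P - Real.log k)) := by
  have : Nonempty (ℕ → M) := ⟨x₀⟩
  obtain ⟨zmin, -, hzmin⟩ := isCompact_univ.exists_isMinOn Set.univ_nonempty hhc.continuousOn
  obtain ⟨zmax, -, hzmax⟩ := isCompact_univ.exists_isMaxOn Set.univ_nonempty hhc.continuousOn
  have hpos n : 0 < (Ruelle μ p)^[n] 1 x₀ :=
    iterate_Ruelle_pos μ hp continuous_const (fun _ => one_pos) n x₀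
  have hZ n : (Ruelle μ (normalizedPotential p h k))^[n] 1 x₀
      = (h x₀)⁻¹ * k⁻¹ ^ n * (Ruelle μ p)^[n] h x₀ := by
    have := congrFun (iterate_Ruelle_mul_eq μ (p := p) hh hk 1 n) x₀
    simp only [Pi.one_apply, mul_one] at this
    rw [this, inv_pow]
    field_simp [(hh x₀).ne']
  have hmono {ψ₁ ψ₂ : (ℕ → M) → ℝ} (hψ₁ : Continuous ψ₁) (hψ₂ : Continuous ψ₂) (hle : ψ₁ ≤ ψ₂)
      (n : ℕ) : (h x₀)⁻¹ * k⁻¹ ^ n * (Ruelle μ p)^[n] ψ₁ x₀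
        ≤ (h x₀)⁻¹ * k⁻¹ ^ n * (Ruelle μ p)^[n] ψ₂ x₀ := by
    have := iterate_Ruelle_mono μ hp hψ₁ hψ₂ hle n x₀
    have := (hh x₀).le
    gcongr
  have hlim := tendsto_inv_mul_log_of_bounds
    (b := fun n => (Ruelle μ (normalizedPotential p h k))^[n] 1 x₀) (K := k⁻¹)
    (m := h zmin / h x₀) (m' := h zmax / h x₀) hpos (inv_pos.2 hk) (div_pos (hh _) (hh _))
    (fun n => ?_) (fun n => ?_) hP
  · rwa [Real.log_inv, ← sub_eq_add_neg] at hlim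
  · have := hmono (ψ₁ := fun y => h zmin * (1 : (ℕ → M) → ℝ) y) (by fun_prop) hhc
      (fun y => by simpa using isMinOn_univ_iff.1 hzmin y) n
    rw [iterate_Ruelle_const_mul, ← hZ] at this
    calc _ = (h x₀)⁻¹ * k⁻¹ ^ n * (h zmin * (Ruelle μ p)^[n] 1 x₀) := by ring
      _ ≤ _ := this
  · have := hmono (ψ₂ := fun y => h zmax * (1 : (ℕ → M) → ℝ) y) hhc (by fun_prop)
      (fun y => by simpa using isMaxOn_univ_iff.1 hzmax y) n
    rw [iterate_Ruelle_const_mul, ← hZ] at this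
    calc _ ≤ _ := this
      _ = _ := by ring

end Transfer

theorem pressure_derivative_general
    {M : Type*} [MetricSpace M] [CompactSpace M] [MeasurableSpace M] [BorelSpace M]
    (μ : Measure M) [IsProbabilityMeasure μ]
    (α : ℝ) (hα0 : 0 < α)
    (f φ : (ℕ → M) → ℝ) (hf : IsHolder α f) (hφ : IsHolder α φ)
    (lam : ℝ) (hlam : 0 < lam)
    (h : (ℕ → M) → ℝ) (hhc : Continuous h) (hhpos : ∀ x, 0 < h x)
    (ν : Measure (ℕ → M)) [IsProbabilityMeasure ν]
    (hnorm : ∫ x, h x ∂ν = 1)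
    (heig : Ruelle μ f h = fun x => lam * h x)
    (hconv : ∀ ψ : (ℕ → M) → ℝ, Continuous ψ →
      TendstoUniformly
        (fun (n : ℕ) (x : ℕ → M) => (lam ^ n)⁻¹ * (Ruelle μ f)^[n] ψ x)
        (fun x => h x * ∫ y, ψ y ∂ν) atTop)
    (P : ℝ → ℝ)
    (hP : ∀ t : ℝ, TendstoUniformly
      (fun (n : ℕ) (x : ℕ → M) =>
        (n : ℝ)⁻¹ * Real.log ((Ruelle μ (fun y => f y + t * φ y))^[n] 1 x))
      (fun _ => P t) atTop) :
    HasDerivAt P (∫ x, φ x * h x ∂ν) 0 := by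
  have hfc := hf.continuous hα0
  have hφc := hφ.continuous hα0
  have : Nonempty M := nonempty_of_isProbabilityMeasure μ
  let x₀ : ℕ → M := Classical.arbitrary _
  obtain ⟨m, -, hm⟩ := isCompact_univ.exists_isMinOn Set.univ_nonempty hhc.continuousOn
  set c := ∫ x, φ x * h x ∂ν
  set g := normalizedPotential f h lam
  have hg : Continuous g := continuous_normalizedPotential hfc hhc hhpos
  have hg1 : Ruelle μ g 1 = 1 := Ruelle_normalizedPotential_one μ hhpos hlam heig
  have hmean : ∫ y, h y * (φ y - c) ∂ν = 0 := integral_mul_sub_integral_mul_eq_zero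
    (hhc.integrable_of_hasCompactSupport (.of_compactSpace _))
    ((hφc.mul hhc).integrable_of_hasCompactSupport (.of_compactSpace _)) hnorm
  have hdecay : TendstoUniformly (fun n => (Ruelle μ g)^[n] (fun y => φ y - c)) 0 atTop :=
    tendstoUniformly_iterate_normalizedPotential μ (hhpos m) (isMinOn_univ_iff.1 hm) hlam
      (by simpa [hmean, ← Pi.zero_def] using hconv (fun y => h y * (φ y - c)) (by fun_prop))
  have hΛ (t : ℝ) : Tendsto (fun n : ℕ => (n : ℝ)⁻¹
      * Real.log ((Ruelle μ (fun y => g y + t * (φ y - c)))^[n] 1 x₀)) atTop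
      (𝓝 (P t - Real.log lam - t * c)) := by
    have := tendsto_log_iterate_normalizedPotential μ (by fun_prop) hhc hhpos
      (mul_pos hlam (Real.exp_pos (t * c))) x₀ ((hP t).tendsto_at x₀)
    rwa [normalizedPotential_add_mul hlam, Real.log_mul hlam.ne' (Real.exp_pos _).ne',
      Real.log_exp, ← sub_sub] at this
  exact hasDerivAt_of_sandwich (fun t => tiltedPressure_nonneg μ hg hg1 (by fun_prop) hdecay (hΛ t))
    fun ε hε => exists_tiltedPressure_le μ hg hg1 (by fun_prop) hdecay x₀ hΛ hε

/-- Derivative of the pressure in the direction of a Hölder potential: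
d/dt P(f+tφ) at t=0 equals ∫ φ h_f dν_f. -/
theorem pressure_derivative
    {M : Type*} [MetricSpace M] [CompactSpace M] [MeasurableSpace M] [BorelSpace M]
    (μ : Measure M) [IsProbabilityMeasure μ]
    (hfull : ∀ U : Set M, IsOpen U → U.Nonempty → 0 < μ U)
    (α : ℝ) (hα0 : 0 < α) (hα1 : α < 1)
    (f φ : (ℕ → M) → ℝ) (hf : IsHolder α f) (hφ : IsHolder α φ)
    (lam : ℝ) (hlam : 0 < lam)
    (h : (ℕ → M) → ℝ) (hhc : Continuous h) (hhpos : ∀ x, 0 < h x)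
    (ν : Measure (ℕ → M)) [IsProbabilityMeasure ν]
    (hnorm : ∫ x, h x ∂ν = 1)
    (heig : Ruelle μ f h = fun x => lam * h x)
    (heig' : ∀ ψ : (ℕ → M) → ℝ, Continuous ψ →
      ∫ x, Ruelle μ f ψ x ∂ν = lam * ∫ x, ψ x ∂ν)
    (hconv : ∀ ψ : (ℕ → M) → ℝ, Continuous ψ →
      TendstoUniformly
        (fun (n : ℕ) (x : ℕ → M) => (lam ^ n)⁻¹ * (Ruelle μ f)^[n] ψ x)
        (fun x => h x * ∫ y, ψ y ∂ν) atTop)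
    (P : ℝ → ℝ)
    (hP : ∀ t : ℝ, TendstoUniformly
      (fun (n : ℕ) (x : ℕ → M) =>
        (n : ℝ)⁻¹ * Real.log ((Ruelle μ (fun y => f y + t * φ y))^[n] 1 x))
      (fun _ => P t) atTop) :
    HasDerivAt P (∫ x, φ x * h x ∂ν) 0 :=
  pressure_derivative_general μ α hα0 f φ hf hφ lam hlam h hhc hhpos ν hnorm heig hconv P hP
end
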